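/- Let θ1, θ2, θ3, θ4 : [0, T] → ℝ be continuous functions such that for every t ∈ [0, T], none of the cyclic differences θ2(t)−θ1(t), θ3(t)−θ2(t), θ4(t)−θ3(t), θ1(t)−θ4(t) is congruent to π modulo 2π. Then the lattice curl C(t) = ⟦θ2(t)−θ1(t)⟧ + ⟦θ3(t)−θ2(t)⟧ + ⟦θ4(t)−θ3(t)⟧ + ⟦θ1(t)−θ4(t)⟧ is constant on [0, T]. (A phase vortex is a topological object conserved under continuous evolution as long as no edge of the cell slips through a phase difference of π.) -/

import Mathlib

open Real Set

/-- `wrap x` is the unique number in the interval `(-π, π]` congruent to `x` modulo `2π`. -/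
noncomputable def wrap (x : ℝ) : ℝ := toIocMod Real.two_pi_pos (-Real.pi) x

/-- `x` is not congruent to `π` modulo `2π`. -/
def NotPiMod (x : ℝ) : Prop := ∀ k : ℤ, x ≠ Real.pi + 2 * Real.pi * k

/-! The four raw differences around the cell telescope to `0`, so the curl is a sum of wrapping
corrections and lies in `2πℤ`. Away from `π + 2πℤ` each `wrap` is continuous, so the curl is a
continuous map from the connected interval `[0, T]` into a discrete set, hence constant. -/

theorem continuousAt_wrap {x : ℝ} (hx : NotPiMod x) : ContinuousAt wrap x := by
  refine continuousAt_toIocMod _ _ fun hmod => ?_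
  obtain ⟨k, hk⟩ := AddCommGroup.modEq_iff_zsmul.1 hmod
  rw [zsmul_eq_mul] at hk
  exact hx (-k - 1) (by push_cast; linarith)

theorem ContinuousOn.wrap {α : Type*} [TopologicalSpace α] {s : Set α} {f : α → ℝ}
    (hf : ContinuousOn f s) (hπ : ∀ t ∈ s, NotPiMod (f t)) :
    ContinuousOn (fun t => wrap (f t)) s := fun t ht =>
  (continuousAt_wrap (hπ t ht)).comp_continuousWithinAt (hf t ht)

theorem wrap_sub_self_mem_zmultiples (x : ℝ) : wrap x - x ∈ AddSubgroup.zmultiples (2 * π) :=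
  ⟨-toIocDiv two_pi_pos (-π) x, (toIocMod_sub_self two_pi_pos (-π) x).symm⟩

noncomputable def latticeCurl (θ₁ θ₂ θ₃ θ₄ : ℝ) : ℝ :=
  wrap (θ₂ - θ₁) + wrap (θ₃ - θ₂) + wrap (θ₄ - θ₃) + wrap (θ₁ - θ₄)

theorem latticeCurl_mem_zmultiples (θ₁ θ₂ θ₃ θ₄ : ℝ) :
    latticeCurl θ₁ θ₂ θ₃ θ₄ ∈ AddSubgroup.zmultiples (2 * π) := by
  have hcorrections : latticeCurl θ₁ θ₂ θ₃ θ₄ =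
      (wrap (θ₂ - θ₁) - (θ₂ - θ₁)) + (wrap (θ₃ - θ₂) - (θ₃ - θ₂)) +
        (wrap (θ₄ - θ₃) - (θ₄ - θ₃)) + (wrap (θ₁ - θ₄) - (θ₁ - θ₄)) := by
    rw [latticeCurl]
    ring
  rw [hcorrections]
  exact add_mem (add_mem (add_mem (wrap_sub_self_mem_zmultiples _)
    (wrap_sub_self_mem_zmultiples _)) (wrap_sub_self_mem_zmultiples _))
    (wrap_sub_self_mem_zmultiples _)

theorem isDiscrete_zmultiples (a : ℝ) : IsDiscrete (AddSubgroup.zmultiples a : Set ℝ) :=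
  isDiscrete_iff_discreteTopology.2 (inferInstanceAs (DiscreteTopology (AddSubgroup.zmultiples a)))

/-- If the four corner phases of a unit cell evolve continuously on `[0, T]` and no cyclic
difference ever passes through `π` mod `2π`, then the lattice curl
`C(t) = ⟦θ2−θ1⟧ + ⟦θ3−θ2⟧ + ⟦θ4−θ3⟧ + ⟦θ1−θ4⟧` is constant on `[0, T]`:
a phase vortex is a conserved topological object. -/
theorem latticeCurl_constant_of_continuous (T : ℝ) (θ1 θ2 θ3 θ4 : ℝ → ℝ)
    (hc1 : ContinuousOn θ1 (Icc 0 T)) (hc2 : ContinuousOn θ2 (Icc 0 T))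
    (hc3 : ContinuousOn θ3 (Icc 0 T)) (hc4 : ContinuousOn θ4 (Icc 0 T))
    (h12 : ∀ t ∈ Icc (0 : ℝ) T, NotPiMod (θ2 t - θ1 t))
    (h23 : ∀ t ∈ Icc (0 : ℝ) T, NotPiMod (θ3 t - θ2 t))
    (h34 : ∀ t ∈ Icc (0 : ℝ) T, NotPiMod (θ4 t - θ3 t))
    (h41 : ∀ t ∈ Icc (0 : ℝ) T, NotPiMod (θ1 t - θ4 t)) :
    ∀ s ∈ Icc (0 : ℝ) T, ∀ t ∈ Icc (0 : ℝ) T,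
      wrap (θ2 s - θ1 s) + wrap (θ3 s - θ2 s) + wrap (θ4 s - θ3 s) + wrap (θ1 s - θ4 s) =
      wrap (θ2 t - θ1 t) + wrap (θ3 t - θ2 t) + wrap (θ4 t - θ3 t) + wrap (θ1 t - θ4 t) := by
  have hcurl : ContinuousOn (fun t => latticeCurl (θ1 t) (θ2 t) (θ3 t) (θ4 t)) (Icc 0 T) :=
    (((hc2.sub hc1).wrap h12).add ((hc3.sub hc2).wrap h23)).add ((hc4.sub hc3).wrap h34)
      |>.add ((hc1.sub hc4).wrap h41)
  intro s hs t ht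
  exact isPreconnected_Icc.constant_of_mapsTo (isDiscrete_zmultiples (2 * π)) hcurl
    (fun _ _ => latticeCurl_mem_zmultiples _ _ _ _) hs ht
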